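/- Suppose ξ(S⁰) < 1 and (1 − ξ(S⁰))² − 4ξ(σ) > 0, where ξ(σ) := max_i Σ_{j=1}^n |Z̃_{ij}·σ_j|. Then γ(S,σ) + 2ξ(S)·η(σ) < 1 and ξ(S) − η(σ) ≤ 1. Consequently, the solvability set of incremental loads certified by the condition of Wang et al. is contained in the solvability set certified by the proposed condition. -/

import Mathlib

open Complex

/-- `η_i(σ) := Σ_j Z̃_{ij} · conj(σ_j)` -/
noncomputable def etaI {n : ℕ} (Z : Matrix (Fin n) (Fin n) ℂ) (σ : Fin n → ℂ) (i : Fin n) : ℂ :=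
  ∑ j, Z i j * (starRingEnd ℂ) (σ j)

/-- `ξ_i(S) := Σ_j |Z̃_{ij} · S_j|` -/
noncomputable def xiI {n : ℕ} (Z : Matrix (Fin n) (Fin n) ℂ) (S : Fin n → ℂ) (i : Fin n) : ℝ :=
  ∑ j, ‖Z i j * S j‖

/-- `γ_i(S,σ) := 2(ξ_i(S) + Re η_i(σ)) − ξ_i(S)² − |η_i(σ)|²` -/
noncomputable def gammaI {n : ℕ} (Z : Matrix (Fin n) (Fin n) ℂ) (S σ : Fin n → ℂ)
    (i : Fin n) : ℝ :=
  2 * (xiI Z S i + (etaI Z σ i).re) - (xiI Z S i) ^ 2 - ‖etaI Z σ i‖ ^ 2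

/-- `η(σ) := max_i |η_i(σ)|` -/
noncomputable def etaMax {n : ℕ} (Z : Matrix (Fin n) (Fin n) ℂ) (σ : Fin n → ℂ) : ℝ :=
  ⨆ i, ‖etaI Z σ i‖

/-- `ξ(S) := max_i ξ_i(S)` -/
noncomputable def xiMax {n : ℕ} (Z : Matrix (Fin n) (Fin n) ℂ) (S : Fin n → ℂ) : ℝ :=
  ⨆ i, xiI Z S i

/-- `γ(S,σ) := max_i γ_i(S,σ)` -/
noncomputable def gammaMax {n : ℕ} (Z : Matrix (Fin n) (Fin n) ℂ) (S σ : Fin n → ℂ) : ℝ :=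
  ⨆ i, gammaI Z S σ i

/-- `r̲ := sqrt((1−γ − √Δ)/(2ξ(S)²))` where `Δ = (1−γ)² − 4ξ(S)²η(σ)²` -/
noncomputable def rLow {n : ℕ} (Z : Matrix (Fin n) (Fin n) ℂ) (S σ : Fin n → ℂ) : ℝ :=
  Real.sqrt ((1 - gammaMax Z S σ -
      Real.sqrt ((1 - gammaMax Z S σ) ^ 2 - 4 * (xiMax Z S) ^ 2 * (etaMax Z σ) ^ 2)) /
    (2 * (xiMax Z S) ^ 2))

/-- `r̄ := sqrt((1−γ + √Δ)/(2ξ(S)²))` where `Δ = (1−γ)² − 4ξ(S)²η(σ)²` -/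
noncomputable def rHigh {n : ℕ} (Z : Matrix (Fin n) (Fin n) ℂ) (S σ : Fin n → ℂ) : ℝ :=
  Real.sqrt ((1 - gammaMax Z S σ +
      Real.sqrt ((1 - gammaMax Z S σ) ^ 2 - 4 * (xiMax Z S) ^ 2 * (etaMax Z σ) ^ 2)) /
    (2 * (xiMax Z S) ^ 2))

/-- the fixed point power flow map
`F(u)_i := 1 − Σ_j Z̃_{ij}·conj(σ_j) + Σ_j Z̃_{ij}·(1 − 1/conj(u_j))·conj(S_j)` -/
noncomputable def pfMap {n : ℕ} (Z : Matrix (Fin n) (Fin n) ℂ) (S σ : Fin n → ℂ)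
    (u : Fin n → ℂ) : Fin n → ℂ :=
  fun i => 1 - ∑ j, Z i j * (starRingEnd ℂ) (σ j)
    + ∑ j, Z i j * (1 - 1 / (starRingEnd ℂ) (u j)) * (starRingEnd ℂ) (S j)

/-!
Write `a = ξ(S⁰)`, `s = ξ(σ)`, `x = ξ(S)` and `y = η(σ)`, so that `x ≤ a + s` and `y ≤ s`.
Since `Re η_i ≤ |η_i|` and `t ↦ 2t − t²` is increasing on `[0, 1]`,
`γ(S,σ) ≤ (2x − x²) + (2y − y²)`, hence `γ + 2xy ≤ 1 − ((1 − x − y)² − 4xy)`.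
The margin `(1 − x − y)² − 4xy` is smallest at `x = a + s`, `y = s`, where it equals
`(1 − a − 2s)² − 4s(a + s) = (1 − a)² − 4s`: exactly the quantity Wang et al. require to be
positive.
-/

lemma two_mul_sub_sq_le_two_mul_sub_sq {p x : ℝ} (hpx : p ≤ x) (hx : x ≤ 1) :
    2 * p - p ^ 2 ≤ 2 * x - x ^ 2 := by
  nlinarith [mul_nonneg (sub_nonneg.2 hpx) (by linarith : (0 : ℝ) ≤ 2 - x - p)]

lemma add_two_mul_lt_one_of_four_mul_lt_sq {a s : ℝ} (ha0 : 0 ≤ a) (ha1 : a < 1)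
    (hw : 4 * s < (1 - a) ^ 2) : a + 2 * s < 1 := by
  nlinarith

lemma four_mul_mul_lt_sq_one_sub_sub {a s x y : ℝ} (ha0 : 0 ≤ a) (ha1 : a < 1)
    (hx : x ≤ a + s) (hy0 : 0 ≤ y) (hy : y ≤ s) (hw : 4 * s < (1 - a) ^ 2) :
    4 * x * y < (1 - x - y) ^ 2 := by
  have hs : 0 ≤ s := hy0.trans hy
  have hlt := add_two_mul_lt_one_of_four_mul_lt_sq ha0 ha1 hw
  calc 4 * x * y ≤ 4 * (a + s) * s := by gcongr
    _ = (1 - a - 2 * s) ^ 2 - ((1 - a) ^ 2 - 4 * s) := by ring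
    _ < (1 - a - 2 * s) ^ 2 := by linarith
    _ ≤ (1 - x - y) ^ 2 := pow_le_pow_left₀ (by linarith) (by linarith) 2

section PowerFlow

variable {n : ℕ} (Z : Matrix (Fin n) (Fin n) ℂ)

lemma xiI_le_xiMax (S : Fin n → ℂ) (i : Fin n) : xiI Z S i ≤ xiMax Z S :=
  le_ciSup (Set.finite_range _).bddAbove i

lemma norm_etaI_le_etaMax (σ : Fin n → ℂ) (i : Fin n) : ‖etaI Z σ i‖ ≤ etaMax Z σ :=
  le_ciSup (f := fun i => ‖etaI Z σ i‖) (Set.finite_range _).bddAbove i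

lemma xiMax_nonneg (S : Fin n → ℂ) : 0 ≤ xiMax Z S :=
  Real.iSup_nonneg fun _ => Finset.sum_nonneg fun _ _ => norm_nonneg _

lemma etaMax_nonneg (σ : Fin n → ℂ) : 0 ≤ etaMax Z σ :=
  Real.iSup_nonneg fun _ => norm_nonneg _

lemma norm_etaI_le_xiI (σ : Fin n → ℂ) (i : Fin n) : ‖etaI Z σ i‖ ≤ xiI Z σ i :=
  (norm_sum_le _ _).trans_eq <| Finset.sum_congr rfl fun j _ => by
    rw [norm_mul, norm_mul, Complex.norm_conj]

lemma etaMax_le_xiMax (σ : Fin n → ℂ) : etaMax Z σ ≤ xiMax Z σ :=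
  Real.iSup_le (fun i => (norm_etaI_le_xiI Z σ i).trans (xiI_le_xiMax Z σ i)) (xiMax_nonneg Z σ)

lemma xiI_add_le (S T : Fin n → ℂ) (i : Fin n) : xiI Z (S + T) i ≤ xiI Z S i + xiI Z T i := by
  rw [xiI, xiI, xiI, ← Finset.sum_add_distrib]
  refine Finset.sum_le_sum fun j _ => ?_
  rw [Pi.add_apply, mul_add]
  exact norm_add_le _ _

lemma xiMax_add_le (S T : Fin n → ℂ) : xiMax Z (S + T) ≤ xiMax Z S + xiMax Z T :=
  Real.iSup_le
    (fun i => (xiI_add_le Z S T i).trans (add_le_add (xiI_le_xiMax Z S i) (xiI_le_xiMax Z T i)))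
    (add_nonneg (xiMax_nonneg Z S) (xiMax_nonneg Z T))

lemma gammaMax_le {S σ : Fin n → ℂ} (hS : xiMax Z S ≤ 1) (hσ : etaMax Z σ ≤ 1) :
    gammaMax Z S σ ≤ (2 * xiMax Z S - xiMax Z S ^ 2) + (2 * etaMax Z σ - etaMax Z σ ^ 2) := by
  refine Real.iSup_le (fun i => ?_) ?_
  · have hξ := two_mul_sub_sq_le_two_mul_sub_sq (xiI_le_xiMax Z S i) hS
    have hη := two_mul_sub_sq_le_two_mul_sub_sq (norm_etaI_le_etaMax Z σ i) hσ
    have hre := Complex.re_le_norm (etaI Z σ i)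
    rw [gammaI]
    linarith
  · nlinarith [xiMax_nonneg Z S, etaMax_nonneg Z σ]

theorem proposed_condition_of_wang_condition {S0 σ : Fin n → ℂ} (hbase : xiMax Z S0 < 1)
    (hw : (1 - xiMax Z S0) ^ 2 - 4 * xiMax Z σ > 0) :
    gammaMax Z (S0 + σ) σ + 2 * xiMax Z (S0 + σ) * etaMax Z σ < 1 ∧
      xiMax Z (S0 + σ) - etaMax Z σ ≤ 1 := by
  have ha0 := xiMax_nonneg Z S0
  have hy0 := etaMax_nonneg Z σ
  have hx := xiMax_add_le Z S0 σ
  have hy := etaMax_le_xiMax Z σ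
  have hw' : 4 * xiMax Z σ < (1 - xiMax Z S0) ^ 2 := by linarith
  have hlt := add_two_mul_lt_one_of_four_mul_lt_sq ha0 hbase hw'
  have hγ := gammaMax_le Z (S := S0 + σ) (σ := σ) (by linarith) (by linarith)
  have hmargin := four_mul_mul_lt_sq_one_sub_sub ha0 hbase hx hy0 hy hw'
  constructor <;> linarith

end PowerFlow

theorem wang_incremental_condition_implies_proposed_general {n : ℕ}
    (Z : Matrix (Fin n) (Fin n) ℂ)
    (S0 : Fin n → ℂ) (hbase : xiMax Z S0 < 1) :
    (∀ σ S : Fin n → ℂ, S = S0 + σ → (1 - xiMax Z S0) ^ 2 - 4 * xiMax Z σ > 0 →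
      gammaMax Z S σ + 2 * xiMax Z S * etaMax Z σ < 1 ∧ xiMax Z S - etaMax Z σ ≤ 1) ∧
    {σ : Fin n → ℂ | (1 - xiMax Z S0) ^ 2 - 4 * xiMax Z σ > 0} ⊆
      {σ : Fin n → ℂ |
        gammaMax Z (S0 + σ) σ + 2 * xiMax Z (S0 + σ) * etaMax Z σ < 1 ∧
        xiMax Z (S0 + σ) - etaMax Z σ ≤ 1} :=
  ⟨fun _ _ hS hw => hS ▸ proposed_condition_of_wang_condition Z hbase hw,
    fun _ hw => proposed_condition_of_wang_condition Z hbase hw⟩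

/-- if `ξ(S⁰) < 1` and `(1 − ξ(S⁰))² − 4ξ(σ) > 0` (the condition of
Wang et al.), then `γ(S,σ) + 2ξ(S)η(σ) < 1` and `ξ(S) − η(σ) ≤ 1`; consequently the
incremental-load solvability set of Wang et al. is contained in the proposed one. -/
theorem wang_incremental_condition_implies_proposed {n : ℕ} (hn : 1 ≤ n)
    (Z : Matrix (Fin n) (Fin n) ℂ) (hZ : IsUnit Z.det)
    (S0 : Fin n → ℂ) (hbase : xiMax Z S0 < 1) :
    (∀ σ S : Fin n → ℂ, S = S0 + σ → (1 - xiMax Z S0) ^ 2 - 4 * xiMax Z σ > 0 →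
      gammaMax Z S σ + 2 * xiMax Z S * etaMax Z σ < 1 ∧ xiMax Z S - etaMax Z σ ≤ 1) ∧
    {σ : Fin n → ℂ | (1 - xiMax Z S0) ^ 2 - 4 * xiMax Z σ > 0} ⊆
      {σ : Fin n → ℂ |
        gammaMax Z (S0 + σ) σ + 2 * xiMax Z (S0 + σ) * etaMax Z σ < 1 ∧
        xiMax Z (S0 + σ) - etaMax Z σ ≤ 1} :=
  wang_incremental_condition_implies_proposed_general Z S0 hbase
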